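/- If a group G is acyclic (H_k(G;ℝ) ≅ 0 for all k > 0) and G satisfies the q-uniform boundary condition, then H_b^{q+1}(G;ℝ) ≅ 0. -/

import Mathlib

open scoped Classical

/-- the degree-`k` part of the bar complex of `G` with real coefficients,
i.e. the free `ℝ`-vector space on `G^k`. -/
abbrev barC (G : Type*) (k : ℕ) : Type _ := (Fin k → G) →₀ ℝ

/-- the ℓ¹-norm on the bar complex, with respect to the basis of tuples. -/
noncomputable def l1Norm {α : Type*} (c : α →₀ ℝ) : ℝ := ∑ a ∈ c.support, |c a|

/-- the boundary operator `∂_{m+1} : C_{m+1}(G;ℝ) → C_m(G;ℝ)` of the bar complex: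
`∂(g_1,…,g_k) = (g_2,…,g_k) + ∑_{j=1}^{k-1} (-1)^j (g_1,…,g_j·g_{j+1},…,g_k) + (-1)^k (g_1,…,g_{k-1})`. -/
noncomputable def barBoundary (G : Type*) [Group G] (m : ℕ) :
    barC G (m + 1) →ₗ[ℝ] barC G m :=
  Finsupp.lsum ℝ fun g => LinearMap.toSpanSingleton ℝ _
    (Finsupp.single (Fin.tail g) 1
      + ∑ j : Fin (m + 1),
          ((-1 : ℝ) ^ ((j : ℕ) + 1)) • Finsupp.single (Fin.contractNth j (· * ·) g) 1)

/-- boundedness of a real-valued function. -/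
def Bddf {α : Type*} (f : α → ℝ) : Prop := ∃ C : ℝ, ∀ x, |f x| ≤ C

/-- the coboundary operator on inhomogeneous cochains, dual to the bar boundary. -/
noncomputable def cobnd (G : Type*) [Group G] (n : ℕ) (f : (Fin n → G) → ℝ) :
    (Fin (n + 1) → G) → ℝ :=
  fun g => f (Fin.tail g)
    + ∑ j : Fin (n + 1), (-1 : ℝ) ^ ((j : ℕ) + 1) * f (Fin.contractNth j (· * ·) g)

/-!
A bounded cocycle `f` is a functional on `(q+1)`-chains that vanishes on boundaries. By
acyclicity, two chains with the same boundary differ by a cycle, hence by a boundary, so this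
functional only depends on `∂c`; the uniform boundary condition then bounds it by
`‖f‖_∞ · κ · ‖∂c‖₁`. Hahn–Banach extends the resulting functional on `im ∂` to an
`ℓ¹`-bounded functional `u` on all `q`-chains, i.e. a bounded `q`-cochain, and `u ∘ ∂ = f`
says `δu = f`.
-/

section L1Norm

variable {α : Type*}

lemma l1Norm_eq_sum_of_support_subset (c : α →₀ ℝ) {s : Finset α} (hs : c.support ⊆ s) :
    l1Norm c = ∑ a ∈ s, |c a| :=
  Finset.sum_subset hs fun a _ ha => by simp [Finsupp.notMem_support_iff.mp ha]

lemma l1Norm_add_le (x y : α →₀ ℝ) : l1Norm (x + y) ≤ l1Norm x + l1Norm y := by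
  rw [l1Norm_eq_sum_of_support_subset (x + y) Finsupp.support_add,
    l1Norm_eq_sum_of_support_subset x Finset.subset_union_left,
    l1Norm_eq_sum_of_support_subset y Finset.subset_union_right, ← Finset.sum_add_distrib]
  exact Finset.sum_le_sum fun a _ => abs_add_le (x a) (y a)

lemma l1Norm_smul (r : ℝ) (x : α →₀ ℝ) : l1Norm (r • x) = |r| * l1Norm x := by
  rw [l1Norm_eq_sum_of_support_subset (r • x) Finsupp.support_smul, l1Norm, Finset.mul_sum]
  simp only [Finsupp.smul_apply, smul_eq_mul, abs_mul]

lemma l1Norm_single_one (a : α) : l1Norm (Finsupp.single a (1 : ℝ)) = 1 := by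
  simp [l1Norm]

variable (α) in
noncomputable def l1Seminorm : Seminorm ℝ (α →₀ ℝ) :=
  Seminorm.of l1Norm l1Norm_add_le l1Norm_smul

@[simp]
lemma l1Seminorm_apply (x : α →₀ ℝ) : l1Seminorm α x = l1Norm x := rfl

lemma abs_linearCombination_le {f : α → ℝ} {M : ℝ} (hM : ∀ a, |f a| ≤ M) (c : α →₀ ℝ) :
    |Finsupp.linearCombination ℝ f c| ≤ M * l1Norm c := by
  rw [Finsupp.linearCombination_apply, Finsupp.sum, l1Norm, Finset.mul_sum]
  refine (Finset.abs_sum_le_sum_abs _ _).trans (Finset.sum_le_sum fun a _ => ?_)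
  rw [smul_eq_mul, abs_mul, mul_comm M]
  exact mul_le_mul_of_nonneg_left (hM a) (abs_nonneg _)

/-- The bound forces `ker D ≤ ker φ`, so `φ` descends to `range D`, where Hahn–Banach
applies. -/
theorem exists_comp_eq_of_abs_le_mul_l1Norm {V : Type*} [AddCommGroup V] [Module ℝ V]
    (D : V →ₗ[ℝ] α →₀ ℝ) (φ : V →ₗ[ℝ] ℝ) {B : ℝ} (hB : 0 ≤ B)
    (hφ : ∀ v, |φ v| ≤ B * l1Norm (D v)) :
    ∃ ψ : (α →₀ ℝ) →ₗ[ℝ] ℝ, ψ ∘ₗ D = φ ∧ ∀ x, |ψ x| ≤ B * l1Norm x := by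
  have hker : LinearMap.ker D ≤ LinearMap.ker φ := fun v hv => by
    simpa [LinearMap.mem_ker.mp hv, l1Norm] using hφ v
  let F : LinearMap.range D →ₗ[ℝ] ℝ :=
    (Submodule.liftQ _ φ hker).comp D.quotKerEquivRange.symm.toLinearMap
  have hF : ∀ v, F ⟨D v, LinearMap.mem_range_self D v⟩ = φ v := fun v => by
    have : D.quotKerEquivRange.symm ⟨D v, LinearMap.mem_range_self D v⟩
        = Submodule.Quotient.mk v :=
      (LinearEquiv.symm_apply_eq _).mpr (Subtype.ext (D.quotKerEquivRange_apply_mk v).symm)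
    simp [F, this]
  obtain ⟨ψ, hψF, hψ⟩ := Module.Dual.exists_extension_of_le_seminorm_real _ F
    (p := B.toNNReal • l1Seminorm α) <| by
      rintro ⟨_, v, rfl⟩
      simpa [hF, NNReal.smul_def, hB] using (le_abs_self _).trans (hφ v)
  refine ⟨ψ, LinearMap.ext fun v => (hψF ⟨D v, _⟩).trans (hF v), fun x => ?_⟩
  simpa [NNReal.smul_def, hB] using hψ x

end L1Norm

section BarComplex

variable {G : Type*} [Group G]

lemma linearCombination_comp_barBoundary (m : ℕ) (f : (Fin m → G) → ℝ) :
    Finsupp.linearCombination ℝ f ∘ₗ barBoundary G m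
      = Finsupp.linearCombination ℝ (cobnd G m f) := by
  refine Finsupp.lhom_ext fun g r => ?_
  simp [barBoundary, cobnd, Finset.mul_sum, mul_add]

lemma linearCombination_barBoundary_eq_zero {m : ℕ} {f : (Fin (m + 1) → G) → ℝ}
    (hf : cobnd G (m + 1) f = 0) (w : barC G (m + 2)) :
    Finsupp.linearCombination ℝ f (barBoundary G (m + 1) w) = 0 := by
  rw [← LinearMap.comp_apply, linearCombination_comp_barBoundary, hf]
  simp

lemma abs_linearCombination_le_of_uniformBoundary {q : ℕ} {κ M : ℝ}
    (hacyc : ∀ z : barC G (q + 1), barBoundary G q z = 0 →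
        z ∈ LinearMap.range (barBoundary G (q + 1)))
    (hubc : ∀ z ∈ LinearMap.range (barBoundary G q),
        ∃ c : barC G (q + 1), barBoundary G q c = z ∧ l1Norm c ≤ κ * l1Norm z)
    {f : (Fin (q + 1) → G) → ℝ} (hM : ∀ x, |f x| ≤ M) (hf : cobnd G (q + 1) f = 0)
    (c : barC G (q + 1)) :
    |Finsupp.linearCombination ℝ f c| ≤ M * κ * l1Norm (barBoundary G q c) := by
  have hM0 : 0 ≤ M := (abs_nonneg _).trans (hM fun _ => 1)
  obtain ⟨c', hc'c, hc'⟩ := hubc _ (LinearMap.mem_range_self _ c)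
  obtain ⟨w, hw⟩ := hacyc (c - c') (by rw [map_sub, hc'c, sub_self])
  have hcc' : Finsupp.linearCombination ℝ f c = Finsupp.linearCombination ℝ f c' := by
    rw [← sub_eq_zero, ← map_sub, ← hw, linearCombination_barBoundary_eq_zero hf]
  calc |Finsupp.linearCombination ℝ f c|
      = |Finsupp.linearCombination ℝ f c'| := by rw [hcc']
    _ ≤ M * l1Norm c' := abs_linearCombination_le hM c'
    _ ≤ M * (κ * l1Norm (barBoundary G q c)) := mul_le_mul_of_nonneg_left hc' hM0
    _ = M * κ * l1Norm (barBoundary G q c) := (mul_assoc _ _ _).symm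

lemma cobnd_eq_of_comp_barBoundary_eq {m : ℕ} {f : (Fin (m + 1) → G) → ℝ}
    {ψ : barC G m →ₗ[ℝ] ℝ} (hψ : ψ ∘ₗ barBoundary G m = Finsupp.linearCombination ℝ f) :
    cobnd G m (fun a => ψ (Finsupp.single a 1)) = f := by
  set u : (Fin m → G) → ℝ := fun a => ψ (Finsupp.single a 1)
  have hu : Finsupp.linearCombination ℝ u = ψ :=
    Finsupp.lhom_ext' fun a => LinearMap.ext_ring (by simp [u])
  funext g
  calc cobnd G m u g = Finsupp.linearCombination ℝ (cobnd G m u) (Finsupp.single g 1) := by simp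
    _ = ψ (barBoundary G m (Finsupp.single g 1)) := by
      rw [← linearCombination_comp_barBoundary, hu, LinearMap.comp_apply]
    _ = f g := by rw [← LinearMap.comp_apply, hψ]; simp

end BarComplex

/-- if `G` is acyclic (`H_k(G;ℝ) ≅ 0` for all `k > 0`, i.e. every cycle
of positive degree in the bar complex is a boundary) and `G` satisfies the `q`-uniform
boundary condition, then `H_b^{q+1}(G;ℝ) ≅ 0`, i.e. every bounded `(q+1)`-cocycle is the
coboundary of a bounded `q`-cochain. -/
theorem acyclic_ubc_implies_bounded_cohomology_vanishes (G : Type*) [Group G] (q : ℕ)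
    (hacyc : ∀ (m : ℕ) (z : barC G (m + 1)), barBoundary G m z = 0 →
        z ∈ LinearMap.range (barBoundary G (m + 1)))
    (hubc : ∃ κ : ℝ, 0 < κ ∧ ∀ z ∈ LinearMap.range (barBoundary G q),
        ∃ c : barC G (q + 1), barBoundary G q c = z ∧ l1Norm c ≤ κ * l1Norm z) :
    ∀ f : (Fin (q + 1) → G) → ℝ, Bddf f → cobnd G (q + 1) f = 0 →
      ∃ u : (Fin q → G) → ℝ, Bddf u ∧ cobnd G q u = f := by
  rintro f ⟨M, hM⟩ hf
  obtain ⟨κ, hκ, hubc⟩ := hubc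
  have hM0 : 0 ≤ M := (abs_nonneg _).trans (hM fun _ => 1)
  obtain ⟨ψ, hψD, hψ⟩ := exists_comp_eq_of_abs_le_mul_l1Norm (barBoundary G q)
    (Finsupp.linearCombination ℝ f) (mul_nonneg hM0 hκ.le)
    (abs_linearCombination_le_of_uniformBoundary (hacyc q) hubc hM hf)
  refine ⟨fun a => ψ (Finsupp.single a 1), ⟨M * κ, fun a => ?_⟩,
    cobnd_eq_of_comp_barBoundary_eq hψD⟩
  simpa [l1Norm_single_one] using hψ (Finsupp.single a 1)
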